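/- arXiv:2601.05691 — 3 statements merged into one kernel-verified Lean document; each statement's English description precedes it below -/
import Mathlib

section
/- Let (X, α) be a T_f-algebra and let φ := f₂^*(α) ∘ (χ₁)_{f_! X} ∘ f₁^*((η_f)_X) : f₁^* X ⟶ f₂^* X. Then φ satisfies the cocycle descent condition (DD2): π₁^*(φ) ∘ j_X ∘ π₂^*(φ) = (j₂)_X ∘ π^*(φ) ∘ (j₁⁻¹)_X, as morphisms π₂^*(f₁^* X) ⟶ π₁^*(f₂^* X). -/
open CategoryTheory

universe v' u' v u

namespace BRPaper

variable (C : Type u) [Category.{v} C] (E : C → Type u') [∀ A, Category.{v'} (E A)]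

/-- A cloven bifibration over `C`, modeled as a contravariant pseudofunctor `pull`
(with coherence isomorphisms `ι`, `κ` satisfying the pseudofunctor axioms)
together with chosen left adjoints `push f ⊣ pull f`. -/
structure ClovenBifib where
  pull : ∀ {B A : C}, (B ⟶ A) → (E A ⥤ E B)
  ι : ∀ B : C, 𝟭 (E B) ≅ pull (𝟙 B)
  κ : ∀ {X Y Z : C} (f : Y ⟶ Z) (g : X ⟶ Y), pull f ⋙ pull g ≅ pull (g ≫ f)
  push : ∀ {B A : C}, (B ⟶ A) → (E B ⥤ E A)
  adj : ∀ {B A : C} (f : B ⟶ A), push f ⊣ pull f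
  κ_id_left : ∀ {B A : C} (f : B ⟶ A),
    Functor.whiskerLeft (pull f) (ι B).hom ≫ (κ f (𝟙 B)).hom =
      eqToHom (by rw [Category.id_comp, Functor.comp_id])
  κ_id_right : ∀ {B A : C} (g : B ⟶ A),
    Functor.whiskerRight (ι A).hom (pull g) ≫ (κ (𝟙 A) g).hom =
      eqToHom (by rw [Category.comp_id, Functor.id_comp])
  κ_assoc : ∀ {X Y Z W : C} (f : Z ⟶ W) (g : Y ⟶ Z) (h : X ⟶ Y),
    Functor.whiskerRight (κ f g).hom (pull h) ≫ (κ (g ≫ f) h).hom =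
      Functor.whiskerLeft (pull f) (κ g h).hom ≫ (κ f (h ≫ g)).hom ≫
        eqToHom (by rw [Category.assoc])

variable {C E}
variable (P : ClovenBifib C E)

namespace ClovenBifib

/-- The mate of a 2-cell `θ : g^* ∘ e^* ⟶ k^* ∘ h^*`. -/
def mate {A₀ B₀ C₀ D₀ : C} {e : B₀ ⟶ A₀} {g : C₀ ⟶ B₀} {k : C₀ ⟶ D₀} {h : D₀ ⟶ A₀}
    (θ : P.pull e ⋙ P.pull g ⟶ P.pull h ⋙ P.pull k) :
    P.pull g ⋙ P.push k ⟶ P.push e ⋙ P.pull h :=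
  Functor.whiskerRight (P.adj e).unit (P.pull g ⋙ P.push k) ≫
    Functor.whiskerRight (Functor.whiskerLeft (P.push e) θ) (P.push k) ≫
    Functor.whiskerLeft (P.push e ⋙ P.pull h) (P.adj k).counit

/-- The two-fold mate of a 2-cell `θ : g^* ∘ e^* ⟶ k^* ∘ h^*`. -/
def twoMate {A₀ B₀ C₀ D₀ : C} {e : B₀ ⟶ A₀} {g : C₀ ⟶ B₀} {k : C₀ ⟶ D₀} {h : D₀ ⟶ A₀}
    (θ : P.pull e ⋙ P.pull g ⟶ P.pull h ⋙ P.pull k) :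
    P.push k ⋙ P.push h ⟶ P.push g ⋙ P.push e :=
  Functor.whiskerRight (P.adj g).unit (P.push k ⋙ P.push h) ≫
    Functor.whiskerRight (Functor.whiskerLeft (P.push g) (P.mate θ)) (P.push h) ≫
    Functor.whiskerLeft (P.push g ⋙ P.push e) (P.adj h).counit

/-- The Beck–Chevalley transformation of a commutative square `a ≫ d = c ≫ b`. -/
def BC {A₀ B₀ C₀ D₀ : C} (a : A₀ ⟶ B₀) (c : A₀ ⟶ C₀) (d : B₀ ⟶ D₀) (b : C₀ ⟶ D₀)
    (sq : a ≫ d = c ≫ b) :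
    P.pull a ⋙ P.push c ⟶ P.push d ⋙ P.pull b :=
  P.mate ((P.κ d a).hom ≫ eqToHom (by rw [sq]) ≫ (P.κ b c).inv)

/-- The Beck–Chevalley property: the Beck–Chevalley transformation of every
pullback square is an isomorphism. -/
def BCCond : Prop :=
  ∀ ⦃A₀ B₀ C₀ D₀ : C⦄ (a : A₀ ⟶ B₀) (c : A₀ ⟶ C₀) (d : B₀ ⟶ D₀) (b : C₀ ⟶ D₀)
    (sq : a ≫ d = c ≫ b), IsPullback a c d b → IsIso (P.BC a c d b sq)

/-- The inverse (backward) Beck–Chevalley transformation. -/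
noncomputable def BCinv {A₀ B₀ C₀ D₀ : C} (a : A₀ ⟶ B₀) (c : A₀ ⟶ C₀) (d : B₀ ⟶ D₀)
    (b : C₀ ⟶ D₀) (sq : a ≫ d = c ≫ b) (hiso : IsIso (P.BC a c d b sq)) :
    P.push d ⋙ P.pull b ⟶ P.pull a ⋙ P.push c :=
  @CategoryTheory.inv _ _ _ _ (P.BC a c d b sq) hiso

variable {A B : C}

/-- The canonical isomorphism `χ₁ : f₁^* ∘ f^* ≅ f₂^* ∘ f^*` for the kernel pair of `f`. -/
def chi1 (f : B ⟶ A) {BAB : C} (f₁ f₂ : BAB ⟶ B) (hf : f₁ ≫ f = f₂ ≫ f) :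
    P.pull f ⋙ P.pull f₁ ≅ P.pull f ⋙ P.pull f₂ :=
  P.κ f f₁ ≪≫ eqToIso (by rw [hf]) ≪≫ (P.κ f f₂).symm

/-- The canonical isomorphism `d_i : Id ≅ Δ^* ∘ f_i^*`. -/
def dIso {BAB : C} (fi : BAB ⟶ B) (Δ : B ⟶ BAB) (hΔ : Δ ≫ fi = 𝟙 B) :
    𝟭 (E B) ≅ P.pull fi ⋙ P.pull Δ :=
  P.ι B ≪≫ eqToIso (by rw [hΔ]) ≪≫ (P.κ fi Δ).symm

/-- The canonical isomorphism `j_i : π^* ∘ f_i^* ≅ π'^* ∘ f_i^*`. -/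
def jIso {BAB Q : C} (fi : BAB ⟶ B) (π π' : Q ⟶ BAB) (hπ : π ≫ fi = π' ≫ fi) :
    P.pull fi ⋙ P.pull π ≅ P.pull fi ⋙ P.pull π' :=
  P.κ fi π ≪≫ eqToIso (by rw [hπ]) ≪≫ (P.κ fi π').symm

/-- The canonical isomorphism `j : π₂^* ∘ f₂^* ≅ π₁^* ∘ f₁^*`. -/
def jCross {BAB Q : C} (f₁ f₂ : BAB ⟶ B) (π₁ π₂ : Q ⟶ BAB) (hππ : π₂ ≫ f₂ = π₁ ≫ f₁) :
    P.pull f₂ ⋙ P.pull π₂ ≅ P.pull f₁ ⋙ P.pull π₁ :=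
  P.κ f₂ π₂ ≪≫ eqToIso (by rw [hππ]) ≪≫ (P.κ f₁ π₁).symm

/-- Multiplication of the monad `T_f = f^* ∘ f_!`. -/
def Tmul (f : B ⟶ A) (X : E B) :
    (P.pull f).obj ((P.push f).obj ((P.pull f).obj ((P.push f).obj X))) ⟶
      (P.pull f).obj ((P.push f).obj X) :=
  (P.pull f).map ((P.adj f).counit.app ((P.push f).obj X))

/-- `φ := f₂^*(α) ∘ (χ₁)_{f_! X} ∘ f₁^*((η_f)_X)`. -/
def phi (f : B ⟶ A) {BAB : C} (f₁ f₂ : BAB ⟶ B) (hf : f₁ ≫ f = f₂ ≫ f)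
    (X : E B) (α : (P.pull f).obj ((P.push f).obj X) ⟶ X) :
    (P.pull f₁).obj X ⟶ (P.pull f₂).obj X :=
  (P.pull f₁).map ((P.adj f).unit.app X) ≫
    (P.chi1 f f₁ f₂ hf).hom.app ((P.push f).obj X) ≫ (P.pull f₂).map α

/-- `ψ := f₁^*(α) ∘ (χ₁⁻¹)_{f_! X} ∘ f₂^*((η_f)_X)`. -/
def psi (f : B ⟶ A) {BAB : C} (f₁ f₂ : BAB ⟶ B) (hf : f₁ ≫ f = f₂ ≫ f)
    (X : E B) (α : (P.pull f).obj ((P.push f).obj X) ⟶ X) :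
    (P.pull f₂).obj X ⟶ (P.pull f₁).obj X :=
  (P.pull f₂).map ((P.adj f).unit.app X) ≫
    (P.chi1 f f₁ f₂ hf).inv.app ((P.push f).obj X) ≫ (P.pull f₁).map α

/-- `β := (ε_{f₂})_X ∘ (f₂)_!(φ)`. -/
def betaMap {BAB : C} (f₁ f₂ : BAB ⟶ B) (X : E B)
    (φ : (P.pull f₁).obj X ⟶ (P.pull f₂).obj X) :
    (P.push f₂).obj ((P.pull f₁).obj X) ⟶ X :=
  (P.push f₂).map φ ≫ (P.adj f₂).counit.app X

/-- The unit `η'` of the monad `(f₂)_! ∘ f₁^*`. -/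
def eta' {BAB : C} (f₁ f₂ : BAB ⟶ B) (Δ : B ⟶ BAB)
    (hΔ₁ : Δ ≫ f₁ = 𝟙 B) (hΔ₂ : Δ ≫ f₂ = 𝟙 B) (X : E B) :
    X ⟶ (P.push f₂).obj ((P.pull f₁).obj X) :=
  (P.dIso f₁ Δ hΔ₁).hom.app X ≫
    (P.pull Δ).map ((P.adj f₂).unit.app ((P.pull f₁).obj X)) ≫
    (P.dIso f₂ Δ hΔ₂).inv.app ((P.push f₂).obj ((P.pull f₁).obj X))

/-- `k₂ : (f₂)_! ∘ (π₁)_! ⟶ (f₂)_! ∘ π_!`, the two-fold mate of `j₂`. -/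
def kTwo {BAB Q : C} (f₂ : BAB ⟶ B) (π π₁ : Q ⟶ BAB) (hπ₂ : π ≫ f₂ = π₁ ≫ f₂) :
    P.push π₁ ⋙ P.push f₂ ⟶ P.push π ⋙ P.push f₂ :=
  P.twoMate (P.jIso f₂ π π₁ hπ₂).hom

/-- The multiplication `μ'` of the monad `(f₂)_! ∘ f₁^*`. -/
noncomputable def mu' {BAB Q : C} (f₁ f₂ : BAB ⟶ B) (π₁ π₂ π : Q ⟶ BAB)
    (hππ : π₂ ≫ f₂ = π₁ ≫ f₁) (hπ₁ : π ≫ f₁ = π₂ ≫ f₁) (hπ₂ : π ≫ f₂ = π₁ ≫ f₂)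
    (hiso : IsIso (P.BC π₂ π₁ f₂ f₁ hππ)) (X : E B) :
    (P.push f₂).obj ((P.pull f₁).obj ((P.push f₂).obj ((P.pull f₁).obj X))) ⟶
      (P.push f₂).obj ((P.pull f₁).obj X) :=
  (P.push f₂).map ((P.BCinv π₂ π₁ f₂ f₁ hππ hiso).app ((P.pull f₁).obj X)) ≫
    (P.push f₂).map ((P.push π₁).map ((P.jIso f₁ π π₂ hπ₁).inv.app X)) ≫
    (P.kTwo f₂ π π₁ hπ₂).app ((P.pull π).obj ((P.pull f₁).obj X)) ≫
    (P.push f₂).map ((P.adj π).counit.app ((P.pull f₁).obj X))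

end ClovenBifib

end BRPaper

/-!
The formula defining `φ` makes sense for any pair `u, v : D ⟶ B` with `u ≫ f = v ≫ f`, giving
`φ(u, v) : u^* X ⟶ v^* X`. These maps are stable under reindexing: `w^* φ(u, v)` is
`φ(w ≫ u, w ≫ v)` up to the isomorphisms `κ`, since `χ₁` is built from `κ` alone. And they
compose: `φ(u, m) ≫ φ(m, v) = φ(u, v)`, because between the two copies of `α` the naturality of
`η_f` and `χ₁` lets (TA2) replace `f^* f_! α` by the multiplication, which the triangle identity
cancels against `η_f`. Once the `j`'s identify the reindexed fibres, (DD2) is the composition law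
for `π₂ ≫ f₁`, `π₂ ≫ f₂ = π₁ ≫ f₁`, `π₁ ≫ f₂`.
-/

namespace BRPaper
namespace ClovenBifib

variable {C : Type u} [Category.{v} C] {E : C → Type u'} [∀ A, Category.{v'} (E A)]
  (P : ClovenBifib C E)

lemma pull_map_κ_hom_app {X Y Z W : C} (f : Z ⟶ W) (g : Y ⟶ Z) (h : X ⟶ Y) (T : E W) :
    (P.pull h).map ((P.κ f g).hom.app T) =
      (P.κ g h).hom.app ((P.pull f).obj T) ≫ (P.κ f (h ≫ g)).hom.app T ≫
        eqToHom (by rw [Category.assoc]) ≫ (P.κ (g ≫ f) h).inv.app T := by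
  rw [← cancel_mono ((P.κ (g ≫ f) h).hom.app T)]
  simpa [eqToHom_app] using congr_app (P.κ_assoc f g h) T

lemma pull_map_κ_inv_app {X Y Z W : C} (f : Z ⟶ W) (g : Y ⟶ Z) (h : X ⟶ Y) (T : E W) :
    (P.pull h).map ((P.κ f g).inv.app T) =
      (P.κ (g ≫ f) h).hom.app T ≫ eqToHom (by rw [Category.assoc]) ≫
        (P.κ f (h ≫ g)).inv.app T ≫ (P.κ g h).inv.app ((P.pull f).obj T) := by
  rw [← cancel_epi ((P.pull h).map ((P.κ f g).hom.app T)), ← Functor.map_comp,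
    Iso.hom_inv_id_app, CategoryTheory.Functor.map_id, pull_map_κ_hom_app]
  simp

lemma κ_inv_app_comp_eqToHom_comp_κ_hom_app {D R Q : C} {a b : D ⟶ R} (p : a = b)
    (w : Q ⟶ D) (T : E R) :
    (P.κ a w).inv.app T ≫ eqToHom (by rw [p]) ≫ (P.κ b w).hom.app T = eqToHom (by rw [p]) := by
  subst p
  simp

lemma chi1_trans {A B D : C} (f : B ⟶ A) (u m v : D ⟶ B) (h₁ : u ≫ f = m ≫ f)
    (h₂ : m ≫ f = v ≫ f) :
    P.chi1 f u m h₁ ≪≫ P.chi1 f m v h₂ = P.chi1 f u v (h₁.trans h₂) := by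
  ext
  simp [chi1, eqToHom_app]

lemma pull_map_chi1_hom_app {A B D Q : C} (f : B ⟶ A) (u v : D ⟶ B) (huv : u ≫ f = v ≫ f)
    (w : Q ⟶ D) (T : E A) :
    (P.pull w).map ((P.chi1 f u v huv).hom.app T) =
      (P.κ u w).hom.app ((P.pull f).obj T) ≫
        (P.chi1 f (w ≫ u) (w ≫ v) (by simp only [Category.assoc, huv])).hom.app T ≫
        (P.κ v w).inv.app ((P.pull f).obj T) := by
  simp only [chi1, Iso.trans_hom, Iso.symm_hom, eqToIso.hom, NatTrans.comp_app, eqToHom_app,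
    Functor.map_comp, eqToHom_map, pull_map_κ_hom_app, pull_map_κ_inv_app, Category.assoc]
  slice_lhs 4 6 => rw [κ_inv_app_comp_eqToHom_comp_κ_hom_app _ huv]
  simp

lemma pull_map_phi {A B D Q : C} (f : B ⟶ A) (u v : D ⟶ B) (huv : u ≫ f = v ≫ f)
    (w : Q ⟶ D) (X : E B) (α : (P.pull f).obj ((P.push f).obj X) ⟶ X) :
    (P.pull w).map (P.phi f u v huv X α) =
      (P.κ u w).hom.app X ≫
        P.phi f (w ≫ u) (w ≫ v) (by simp only [Category.assoc, huv]) X α ≫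
        (P.κ v w).inv.app X := by
  have hη := (P.κ u w).hom.naturality ((P.adj f).unit.app X)
  have hα := (P.κ v w).inv.naturality α
  simp only [Functor.comp_map, Functor.id_obj, Functor.comp_obj] at hη hα
  simp only [phi, Functor.map_comp, pull_map_chi1_hom_app, Category.assoc]
  rw [reassoc_of% hη, hα]

lemma phi_congr {A B D : C} (f : B ⟶ A) {u v u' v' : D ⟶ B} (hu : u = u') (hv : v = v')
    (h : u ≫ f = v ≫ f) (X : E B) (α : (P.pull f).obj ((P.push f).obj X) ⟶ X) :
    P.phi f u v h X α =
      eqToHom (by rw [hu]) ≫ P.phi f u' v' (hu ▸ hv ▸ h) X α ≫ eqToHom (by rw [hv]) := by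
  subst hu hv
  simp

lemma pull_map_comp_phi {A B D : C} (f : B ⟶ A) (m v : D ⟶ B) (h : m ≫ f = v ≫ f)
    (X : E B) (α : (P.pull f).obj ((P.push f).obj X) ⟶ X)
    (hTA2 : P.Tmul f X ≫ α = (P.pull f).map ((P.push f).map α) ≫ α) :
    (P.pull m).map α ≫ P.phi f m v h X α =
      (P.chi1 f m v h).hom.app ((P.push f).obj X) ≫ (P.pull v).map α := by
  let T := (P.pull f).obj ((P.push f).obj X)
  let ε := (P.adj f).counit.app ((P.push f).obj X)
  have hη : α ≫ (P.adj f).unit.app X = (P.adj f).unit.app T ≫ (P.pull f).map ((P.push f).map α) :=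
    (P.adj f).unit.naturality α
  have hχ := (P.chi1 f m v h).hom.naturality
  simp only [Functor.comp_obj, Functor.comp_map] at hχ
  have triangle : (P.adj f).unit.app T ≫ (P.pull f).map ε = 𝟙 T :=
    (P.adj f).right_triangle_components _
  calc (P.pull m).map α ≫ P.phi f m v h X α
      = (P.pull m).map ((P.adj f).unit.app T) ≫ (P.chi1 f m v h).hom.app _ ≫
          (P.pull v).map ((P.pull f).map ((P.push f).map α) ≫ α) := by
        rw [phi, ← Functor.map_comp_assoc, hη, Functor.map_comp, Category.assoc, reassoc_of% hχ,
          Functor.map_comp]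
    _ = (P.pull m).map ((P.adj f).unit.app T ≫ (P.pull f).map ε) ≫
          (P.chi1 f m v h).hom.app _ ≫ (P.pull v).map α := by
        rw [← hTA2, Tmul, Functor.map_comp, Functor.map_comp, Category.assoc, reassoc_of% hχ]
    _ = (P.chi1 f m v h).hom.app ((P.push f).obj X) ≫ (P.pull v).map α := by
        rw [triangle]
        simp

lemma phi_comp_phi {A B D : C} (f : B ⟶ A) (u m v : D ⟶ B) (h₁ : u ≫ f = m ≫ f)
    (h₂ : m ≫ f = v ≫ f) (X : E B) (α : (P.pull f).obj ((P.push f).obj X) ⟶ X)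
    (hTA2 : P.Tmul f X ≫ α = (P.pull f).map ((P.push f).map α) ≫ α) :
    P.phi f u m h₁ X α ≫ P.phi f m v h₂ X α = P.phi f u v (h₁.trans h₂) X α := by
  rw [phi, Category.assoc, Category.assoc, P.pull_map_comp_phi f m v h₂ X α hTA2, phi,
    ← chi1_trans _ f u m v h₁ h₂]
  simp

end ClovenBifib
end BRPaper

open BRPaper ClovenBifib CategoryTheory

theorem benabou_roubaud_phi_DD2_general
    {C : Type u} [Category.{v} C]
    {E : C → Type u'} [∀ A, Category.{v'} (E A)] (P : ClovenBifib C E)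
    {A B : C} (f : B ⟶ A) {BAB : C} (f₁ f₂ : BAB ⟶ B)
    (hf : f₁ ≫ f = f₂ ≫ f)
    {Q : C} (π₁ π₂ : Q ⟶ BAB) (hππ : π₂ ≫ f₂ = π₁ ≫ f₁)
    (π : Q ⟶ BAB) (hπ₁ : π ≫ f₁ = π₂ ≫ f₁) (hπ₂ : π ≫ f₂ = π₁ ≫ f₂)
    (X : E B) (α : (P.pull f).obj ((P.push f).obj X) ⟶ X)
    (hTA2 : P.Tmul f X ≫ α = (P.pull f).map ((P.push f).map α) ≫ α) :
    (P.pull π₂).map (P.phi f f₁ f₂ hf X α) ≫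
        (P.jCross f₁ f₂ π₁ π₂ hππ).hom.app X ≫
        (P.pull π₁).map (P.phi f f₁ f₂ hf X α) =
      (P.jIso f₁ π π₂ hπ₁).inv.app X ≫
        (P.pull π).map (P.phi f f₁ f₂ hf X α) ≫
        (P.jIso f₂ π π₁ hπ₂).hom.app X := by
  have cocycle := P.phi_comp_phi f (π₂ ≫ f₁) (π₂ ≫ f₂) (π₁ ≫ f₂)
    (by simp only [Category.assoc, hf]) (by rw [hππ]; simp only [Category.assoc, hf]) X α hTA2
  rw [P.pull_map_phi f f₁ f₂ hf π₂, P.pull_map_phi f f₁ f₂ hf π₁, P.pull_map_phi f f₁ f₂ hf π,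
    P.phi_congr f hπ₁ hπ₂, P.phi_congr f hππ.symm rfl, ← cocycle]
  simp [jCross, jIso, eqToHom_app]

/-- For a `T_f`-algebra `(X, α)`, the morphism
`φ := f₂^*(α) ∘ (χ₁)_{f_! X} ∘ f₁^*((η_f)_X)` satisfies the cocycle descent
condition (DD2): `π₁^*(φ) ∘ j_X ∘ π₂^*(φ) = (j₂)_X ∘ π^*(φ) ∘ (j₁⁻¹)_X`. -/
theorem benabou_roubaud_phi_DD2
    {C : Type u} [Category.{v} C] [Limits.HasPullbacks C]
    {E : C → Type u'} [∀ A, Category.{v'} (E A)] (P : ClovenBifib C E)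
    {A B : C} (f : B ⟶ A) {BAB : C} (f₁ f₂ : BAB ⟶ B)
    (hf : f₁ ≫ f = f₂ ≫ f) (hkp : IsPullback f₁ f₂ f f)
    {Q : C} (π₁ π₂ : Q ⟶ BAB) (hππ : π₂ ≫ f₂ = π₁ ≫ f₁) (hpbQ : IsPullback π₂ π₁ f₂ f₁)
    (π : Q ⟶ BAB) (hπ₁ : π ≫ f₁ = π₂ ≫ f₁) (hπ₂ : π ≫ f₂ = π₁ ≫ f₂)
    (X : E B) (α : (P.pull f).obj ((P.push f).obj X) ⟶ X)
    (hTA1 : (P.adj f).unit.app X ≫ α = 𝟙 X)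
    (hTA2 : P.Tmul f X ≫ α = (P.pull f).map ((P.push f).map α) ≫ α) :
    (P.pull π₂).map (P.phi f f₁ f₂ hf X α) ≫
        (P.jCross f₁ f₂ π₁ π₂ hππ).hom.app X ≫
        (P.pull π₁).map (P.phi f f₁ f₂ hf X α) =
      (P.jIso f₁ π π₂ hπ₁).inv.app X ≫
        (P.pull π).map (P.phi f f₁ f₂ hf X α) ≫
        (P.jIso f₂ π π₁ hπ₂).hom.app X :=
  benabou_roubaud_phi_DD2_general P f f₁ f₂ hf π₁ π₂ hππ π hπ₁ hπ₂ X α hTA2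
end

section
/- (η′-transfer) Assume the Beck–Chevalley property. Then BC₁ ∘ η′ = η_f as natural transformations Id_{ℰ_B} ⟶ f^* ∘ f_!; componentwise, (BC₁)_X ∘ η'_X = (η_f)_X for every object X of ℰ_B. -/
open CategoryTheory

universe v' u' v u

open BRPaper ClovenBifib CategoryTheory

/-!
`BC₁` is the transpose, under `(f₂)_! ⊣ f₂^*`, of `u := χ₁ ∘ f₁^*(η_f) : f₁^* ⟶ f₂^* f^* f_!`.
Composing with `η'` cancels the unit `η_{f₂}` against that transpose (triangle identity), leaving
`d₂⁻¹ ∘ Δ^*(u) ∘ d₁`. By naturality of `d₁` this is `(d₂⁻¹ ∘ Δ^*(χ₁) ∘ d₁) ∘ η_f`, and the bracket is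
the identity by pseudofunctor coherence: both `Δ^* f₁^* f^*` and `Δ^* f₂^* f^*` are canonically
`(Δ ≫ f_i ≫ f)^* = f^*`, and `χ₁` is the comparison between them.
-/

namespace BRPaper.ClovenBifib

variable {C : Type u} [Category.{v} C] {E : C → Type u'} [∀ A, Category.{v'} (E A)]
  (P : ClovenBifib C E)

lemma κ_assoc_app {X Y Z W : C} (f : Z ⟶ W) (g : Y ⟶ Z) (h : X ⟶ Y) (M : E W) :
    (P.pull h).map ((P.κ f g).hom.app M) ≫ (P.κ (g ≫ f) h).hom.app M =
      (P.κ g h).hom.app ((P.pull f).obj M) ≫ (P.κ f (h ≫ g)).hom.app M ≫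
        eqToHom (by rw [Category.assoc]) := by
  simpa [eqToHom_app] using NatTrans.congr_app (P.κ_assoc f g h) M

lemma ι_hom_app_comp_κ_hom_app {B A : C} (f : B ⟶ A) (M : E A) :
    (P.ι B).hom.app ((P.pull f).obj M) ≫ (P.κ f (𝟙 B)).hom.app M =
      eqToHom (by rw [Category.id_comp]; rfl) := by
  simpa [eqToHom_app] using NatTrans.congr_app (P.κ_id_left f) M

lemma eqToHom_comp_κ_hom_app {X Y Z : C} (f : Y ⟶ Z) {g g' : X ⟶ Y} (h : g = g') (M : E Z) :
    (eqToHom (by rw [h]) :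
        (P.pull g).obj ((P.pull f).obj M) ⟶ (P.pull g').obj ((P.pull f).obj M)) ≫
      (P.κ f g').hom.app M =
      (P.κ f g).hom.app M ≫ eqToHom (by rw [h]) := by
  subst h; simp

lemma κ_inv_app_comp_eqToHom {X Y Z : C} {f f' : Y ⟶ Z} (h : f = f') (g : X ⟶ Y) (M : E Z) :
    (P.κ f g).inv.app M ≫
        (eqToHom (by rw [h]) :
          (P.pull g).obj ((P.pull f).obj M) ⟶ (P.pull g).obj ((P.pull f').obj M)) =
      eqToHom (by rw [h]) ≫ (P.κ f' g).inv.app M := by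
  subst h; simp

lemma mate_app {A₀ B₀ C₀ D₀ : C} {e : B₀ ⟶ A₀} {g : C₀ ⟶ B₀} {k : C₀ ⟶ D₀} {h : D₀ ⟶ A₀}
    (θ : P.pull e ⋙ P.pull g ⟶ P.pull h ⋙ P.pull k) (X : E B₀) :
    (P.mate θ).app X = ((P.adj k).homEquiv _ _).symm
      ((P.pull g).map ((P.adj e).unit.app X) ≫ θ.app ((P.push e).obj X)) := by
  simp [mate, Adjunction.homEquiv_counit]

lemma BC_eq_mate_chi1_hom {A B BAB : C} (f : B ⟶ A) (f₁ f₂ : BAB ⟶ B) (hf : f₁ ≫ f = f₂ ≫ f) :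
    P.BC f₁ f₂ f f hf = P.mate (P.chi1 f f₁ f₂ hf).hom :=
  rfl

variable {B BAB : C}

lemma eta'_comp_homEquiv_symm (f₁ f₂ : BAB ⟶ B) (Δ : B ⟶ BAB)
    (hΔ₁ : Δ ≫ f₁ = 𝟙 B) (hΔ₂ : Δ ≫ f₂ = 𝟙 B) {X Y : E B}
    (u : (P.pull f₁).obj X ⟶ (P.pull f₂).obj Y) :
    P.eta' f₁ f₂ Δ hΔ₁ hΔ₂ X ≫ ((P.adj f₂).homEquiv _ _).symm u =
      (P.dIso f₁ Δ hΔ₁).hom.app X ≫ (P.pull Δ).map u ≫ (P.dIso f₂ Δ hΔ₂).inv.app Y := by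
  have hnat := (P.dIso f₂ Δ hΔ₂).inv.naturality (((P.adj f₂).homEquiv _ _).symm u)
  dsimp at hnat
  rw [eta', Category.assoc, Category.assoc, ← hnat, ← Functor.map_comp_assoc,
    ← Adjunction.homEquiv_unit, Equiv.apply_symm_apply]

lemma dIso_hom_app_comp_map_κ_hom_app {A : C} (f : B ⟶ A) (fi : BAB ⟶ B) (Δ : B ⟶ BAB)
    (hΔ : Δ ≫ fi = 𝟙 B) (M : E A) :
    (P.dIso fi Δ hΔ).hom.app ((P.pull f).obj M) ≫ (P.pull Δ).map ((P.κ f fi).hom.app M) =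
      eqToHom (by rw [← Category.assoc, hΔ, Category.id_comp]; rfl) ≫
        (P.κ (fi ≫ f) Δ).inv.app M := by
  have hmap : (P.pull Δ).map ((P.κ f fi).hom.app M) =
      ((P.κ fi Δ).hom.app ((P.pull f).obj M) ≫ (P.κ f (Δ ≫ fi)).hom.app M ≫
        eqToHom (by rw [Category.assoc])) ≫ (P.κ (fi ≫ f) Δ).inv.app M := by
    rw [← P.κ_assoc_app, Category.assoc, Iso.hom_inv_id_app]
    exact (Category.comp_id _).symm
  rw [hmap]
  simp only [dIso, Iso.trans_hom, eqToIso.hom, Iso.symm_hom, NatTrans.comp_app,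
    eqToHom_app, Category.assoc, Iso.inv_hom_id_app_assoc]
  rw [reassoc_of% P.eqToHom_comp_κ_hom_app f hΔ.symm M,
    reassoc_of% P.ι_hom_app_comp_κ_hom_app f M]
  simp

lemma dIso_hom_app_comp_map_chi1_hom_app_comp_dIso_inv_app {A : C} (f : B ⟶ A)
    (f₁ f₂ : BAB ⟶ B) (hf : f₁ ≫ f = f₂ ≫ f) (Δ : B ⟶ BAB)
    (hΔ₁ : Δ ≫ f₁ = 𝟙 B) (hΔ₂ : Δ ≫ f₂ = 𝟙 B) (M : E A) :
    (P.dIso f₁ Δ hΔ₁).hom.app ((P.pull f).obj M) ≫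
        (P.pull Δ).map ((P.chi1 f f₁ f₂ hf).hom.app M) ≫
        (P.dIso f₂ Δ hΔ₂).inv.app ((P.pull f).obj M) = 𝟙 _ := by
  have hκ₂ : (P.κ (f₂ ≫ f) Δ).inv.app M =
      eqToHom (by rw [← Category.assoc, hΔ₂, Category.id_comp]; rfl) ≫
        (P.dIso f₂ Δ hΔ₂).hom.app ((P.pull f).obj M) ≫ (P.pull Δ).map ((P.κ f f₂).hom.app M) := by
    rw [P.dIso_hom_app_comp_map_κ_hom_app]
    simp
  have h₂ : (P.κ (f₂ ≫ f) Δ).inv.app M ≫ (P.pull Δ).map ((P.κ f f₂).inv.app M) ≫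
      (P.dIso f₂ Δ hΔ₂).inv.app ((P.pull f).obj M) =
        eqToHom (by rw [← Category.assoc, hΔ₂, Category.id_comp]; rfl) := by
    simp [hκ₂, ← Functor.map_comp_assoc]
  simp only [chi1, Iso.trans_hom, eqToIso.hom, Iso.symm_hom, NatTrans.comp_app,
    eqToHom_app, Functor.map_comp, eqToHom_map, Category.assoc]
  rw [reassoc_of% P.dIso_hom_app_comp_map_κ_hom_app f f₁ Δ hΔ₁ M,
    reassoc_of% P.κ_inv_app_comp_eqToHom hf Δ M, h₂]
  simp

end BRPaper.ClovenBifib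

theorem benabou_roubaud_eta'_transfer_general
    {C : Type u} [Category.{v} C]
    {E : C → Type u'} [∀ A, Category.{v'} (E A)] (P : ClovenBifib C E)
    {A B : C} (f : B ⟶ A) {BAB : C} (f₁ f₂ : BAB ⟶ B)
    (hf : f₁ ≫ f = f₂ ≫ f)
    (Δ : B ⟶ BAB) (hΔ₁ : Δ ≫ f₁ = 𝟙 B) (hΔ₂ : Δ ≫ f₂ = 𝟙 B) :
    ∀ X : E B,
      P.eta' f₁ f₂ Δ hΔ₁ hΔ₂ X ≫ (P.BC f₁ f₂ f f hf).app X =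
        (P.adj f).unit.app X := by
  intro X
  have hunit := (P.dIso f₁ Δ hΔ₁).hom.naturality ((P.adj f).unit.app X)
  dsimp at hunit
  rw [BC_eq_mate_chi1_hom, mate_app]
  refine (P.eta'_comp_homEquiv_symm f₁ f₂ Δ hΔ₁ hΔ₂ _).trans ?_
  rw [Functor.map_comp_assoc, ← reassoc_of% hunit]
  exact (congrArg _ (P.dIso_hom_app_comp_map_chi1_hom_app_comp_dIso_inv_app f f₁ f₂ hf Δ
    hΔ₁ hΔ₂ _)).trans (Category.comp_id _)

/-- **η′-transfer.** Assume the Beck–Chevalley property. Then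
`BC₁ ∘ η′ = η_f`, componentwise: `(BC₁)_X ∘ η'_X = (η_f)_X` for every `X`. -/
theorem benabou_roubaud_eta'_transfer
    {C : Type u} [Category.{v} C] [Limits.HasPullbacks C]
    {E : C → Type u'} [∀ A, Category.{v'} (E A)] (P : ClovenBifib C E)
    (hBC : P.BCCond)
    {A B : C} (f : B ⟶ A) {BAB : C} (f₁ f₂ : BAB ⟶ B)
    (hf : f₁ ≫ f = f₂ ≫ f) (hkp : IsPullback f₁ f₂ f f)
    (Δ : B ⟶ BAB) (hΔ₁ : Δ ≫ f₁ = 𝟙 B) (hΔ₂ : Δ ≫ f₂ = 𝟙 B) :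
    ∀ X : E B,
      P.eta' f₁ f₂ Δ hΔ₁ hΔ₂ X ≫ (P.BC f₁ f₂ f f hf).app X =
        (P.adj f).unit.app X :=
  benabou_roubaud_eta'_transfer_general P f f₁ f₂ hf Δ hΔ₁ hΔ₂
end

section
/- Assume the Beck–Chevalley property. Let (X, β) be an action of Eq(f) on p (so β : (f₂)_!(f₁^* X) ⟶ X satisfies (AC1) and (AC2)). Define α := β ∘ (BC₁⁻¹)_X : f^*(f_! X) ⟶ X. Then α satisfies the algebra unit axiom (TA1): α ∘ (η_f)_X = id_X. -/
open CategoryTheory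

universe v' u' v u

/-!
`BC₁` is the transpose under `(f₂)_! ⊣ f₂^*` of `χ₁ ∘ f₁^*(η_f)`. Composing it with `η'` and
using the naturality of `d₁` and `d₂`, the transpose cancels against the unit of `f₂` and what is
left is `d₂⁻¹ ∘ Δ^*(χ₁) ∘ d₁ ∘ η_f`; pseudofunctor coherence identifies `Δ^*(χ₁) ∘ d₁` with `d₂`.
Hence `BC₁ ∘ η' = η_f`, i.e. `BC₁⁻¹ ∘ η_f = η'`, and (TA1) for `α` is (AC1) for `β`.
-/

namespace BRPaper.ClovenBifib

variable {C : Type u} [Category.{v} C] {E : C → Type u'} [∀ A, Category.{v'} (E A)]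
variable (P : ClovenBifib C E)

lemma κ_hom_app_congr_left {X₀ Y₀ Z₀ : C} {u u' : Y₀ ⟶ Z₀} (h : u = u') (g : X₀ ⟶ Y₀)
    (W : E Z₀) :
    (P.κ u g).hom.app W =
      eqToHom (by rw [h]) ≫ (P.κ u' g).hom.app W ≫ eqToHom (by rw [h]) := by
  subst h; simp

lemma κ_hom_app_congr_right {X₀ Y₀ Z₀ : C} {g g' : X₀ ⟶ Y₀} (h : g = g') (u : Y₀ ⟶ Z₀)
    (W : E Z₀) :
    (P.κ u g).hom.app W =
      eqToHom (by rw [h]) ≫ (P.κ u g').hom.app W ≫ eqToHom (by rw [h]) := by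
  subst h; simp

lemma dIso_hom_app_comp_κ_hom_app {A B BAB : C} (fi : BAB ⟶ B) (Δ : B ⟶ BAB)
    (hΔ : Δ ≫ fi = 𝟙 B) (f : B ⟶ A) (W : E A) :
    (P.dIso fi Δ hΔ).hom.app ((P.pull f).obj W) ≫
        (P.pull Δ).map ((P.κ f fi).hom.app W) ≫ (P.κ (fi ≫ f) Δ).hom.app W =
      eqToHom (by rw [← Category.assoc, hΔ, Category.id_comp]; rfl) := by
  have hassoc := NatTrans.congr_app (P.κ_assoc f fi Δ) W
  have hunit := NatTrans.congr_app (P.κ_id_left f) W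
  simp only [NatTrans.comp_app, Functor.comp_obj, Functor.whiskerRight_app,
    Functor.whiskerLeft_app, eqToHom_app] at hassoc hunit
  rw [hassoc, P.κ_hom_app_congr_right hΔ f W]
  simp [dIso, reassoc_of% hunit]

lemma dIso_hom_app_comp_map_chi1_hom_app {A B BAB : C} (f : B ⟶ A) (f₁ f₂ : BAB ⟶ B)
    (hf : f₁ ≫ f = f₂ ≫ f) (Δ : B ⟶ BAB) (hΔ₁ : Δ ≫ f₁ = 𝟙 B) (hΔ₂ : Δ ≫ f₂ = 𝟙 B)
    (W : E A) :
    (P.dIso f₁ Δ hΔ₁).hom.app ((P.pull f).obj W) ≫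
        (P.pull Δ).map ((P.chi1 f f₁ f₂ hf).hom.app W) =
      (P.dIso f₂ Δ hΔ₂).hom.app ((P.pull f).obj W) := by
  rw [← cancel_mono ((P.pull Δ).map ((P.κ f f₂).hom.app W) ≫ (P.κ (f₂ ≫ f) Δ).hom.app W),
    P.dIso_hom_app_comp_κ_hom_app f₂ Δ hΔ₂ f W, P.κ_hom_app_congr_left hf.symm Δ W]
  simp only [chi1, Iso.trans_hom, eqToIso.hom, Iso.symm_hom, NatTrans.comp_app, eqToHom_app,
    Functor.map_comp, Category.assoc]
  rw [← Functor.map_comp_assoc (P.pull Δ) ((P.κ f f₂).inv.app W), Iso.inv_hom_id_app,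
    CategoryTheory.Functor.map_id, Category.id_comp, eqToHom_map, eqToHom_trans_assoc, eqToHom_refl,
    Category.id_comp, reassoc_of% (P.dIso_hom_app_comp_κ_hom_app f₁ Δ hΔ₁ f W)]
  simp

lemma eta'_comp_BC_app {A B BAB : C} (f : B ⟶ A) (f₁ f₂ : BAB ⟶ B) (hf : f₁ ≫ f = f₂ ≫ f)
    (Δ : B ⟶ BAB) (hΔ₁ : Δ ≫ f₁ = 𝟙 B) (hΔ₂ : Δ ≫ f₂ = 𝟙 B) (X : E B) :
    P.eta' f₁ f₂ Δ hΔ₁ hΔ₂ X ≫ (P.BC f₁ f₂ f f hf).app X = (P.adj f).unit.app X := by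
  set g := (P.pull f₁).map ((P.adj f).unit.app X) ≫
    (P.chi1 f f₁ f₂ hf).hom.app ((P.push f).obj X) with hg
  have hBC : (P.BC f₁ f₂ f f hf).app X =
      (P.push f₂).map g ≫ (P.adj f₂).counit.app ((P.pull f).obj ((P.push f).obj X)) := by
    simp [hg, BC, mate, chi1]
  have htranspose : (P.adj f₂).unit.app ((P.pull f₁).obj X) ≫
      (P.pull f₂).map ((P.push f₂).map g ≫ (P.adj f₂).counit.app _) = g := by
    simp
  have hd₁ := (P.dIso f₁ Δ hΔ₁).hom.naturality ((P.adj f).unit.app X)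
  have hd₂ := (P.dIso f₂ Δ hΔ₂).inv.naturality
    ((P.push f₂).map g ≫ (P.adj f₂).counit.app ((P.pull f).obj ((P.push f).obj X)))
  simp only [Functor.id_obj, Functor.id_map, Functor.comp_obj, Functor.comp_map] at hd₁ hd₂
  rw [eta', hBC, Category.assoc, Category.assoc, ← hd₂, ← Functor.map_comp_assoc, htranspose,
    hg, Functor.map_comp, Category.assoc, ← reassoc_of% hd₁,
    reassoc_of% (P.dIso_hom_app_comp_map_chi1_hom_app f f₁ f₂ hf Δ hΔ₁ hΔ₂ _),
    Iso.hom_inv_id_app]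
  exact Category.comp_id _

end BRPaper.ClovenBifib

open BRPaper ClovenBifib CategoryTheory

theorem benabou_roubaud_alpha_TA1_general
    {C : Type u} [Category.{v} C]
    {E : C → Type u'} [∀ A, Category.{v'} (E A)] (P : ClovenBifib C E)
    (hBC : P.BCCond)
    {A B : C} (f : B ⟶ A) {BAB : C} (f₁ f₂ : BAB ⟶ B)
    (hf : f₁ ≫ f = f₂ ≫ f) (hkp : IsPullback f₁ f₂ f f)
    (Δ : B ⟶ BAB) (hΔ₁ : Δ ≫ f₁ = 𝟙 B) (hΔ₂ : Δ ≫ f₂ = 𝟙 B)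
    (X : E B) (β : (P.push f₂).obj ((P.pull f₁).obj X) ⟶ X)
    (hAC1 : P.eta' f₁ f₂ Δ hΔ₁ hΔ₂ X ≫ β = 𝟙 X) :
    (P.adj f).unit.app X ≫
        ((P.BCinv f₁ f₂ f f hf (hBC f₁ f₂ f f hf hkp)).app X ≫ β) = 𝟙 X := by
  have hiso := hBC f₁ f₂ f f hf hkp
  have hunit : (P.adj f).unit.app X ≫ (P.BCinv f₁ f₂ f f hf hiso).app X =
      P.eta' f₁ f₂ Δ hΔ₁ hΔ₂ X := by
    rw [← P.eta'_comp_BC_app f f₁ f₂ hf Δ hΔ₁ hΔ₂ X, BCinv, Category.assoc,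
      ← NatTrans.comp_app, IsIso.hom_inv_id, NatTrans.id_app]
    exact Category.comp_id _
  rw [reassoc_of% hunit, hAC1]

/-- Assume the Beck–Chevalley property. If `(X, β)` is an action
of `Eq(f)` on `p`, then `α := β ∘ (BC₁⁻¹)_X` satisfies the algebra unit axiom
(TA1): `α ∘ (η_f)_X = id_X`. -/
theorem benabou_roubaud_alpha_TA1
    {C : Type u} [Category.{v} C] [Limits.HasPullbacks C]
    {E : C → Type u'} [∀ A, Category.{v'} (E A)] (P : ClovenBifib C E)
    (hBC : P.BCCond)
    {A B : C} (f : B ⟶ A) {BAB : C} (f₁ f₂ : BAB ⟶ B)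
    (hf : f₁ ≫ f = f₂ ≫ f) (hkp : IsPullback f₁ f₂ f f)
    (Δ : B ⟶ BAB) (hΔ₁ : Δ ≫ f₁ = 𝟙 B) (hΔ₂ : Δ ≫ f₂ = 𝟙 B)
    {Q : C} (π₁ π₂ : Q ⟶ BAB) (hππ : π₂ ≫ f₂ = π₁ ≫ f₁) (hpbQ : IsPullback π₂ π₁ f₂ f₁)
    (π : Q ⟶ BAB) (hπ₁ : π ≫ f₁ = π₂ ≫ f₁) (hπ₂ : π ≫ f₂ = π₁ ≫ f₂)
    (X : E B) (β : (P.push f₂).obj ((P.pull f₁).obj X) ⟶ X)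
    (hAC1 : P.eta' f₁ f₂ Δ hΔ₁ hΔ₂ X ≫ β = 𝟙 X)
    (hAC2 : P.mu' f₁ f₂ π₁ π₂ π hππ hπ₁ hπ₂ (hBC π₂ π₁ f₂ f₁ hππ hpbQ) X ≫ β =
      (P.push f₂).map ((P.pull f₁).map β) ≫ β) :
    (P.adj f).unit.app X ≫
        ((P.BCinv f₁ f₂ f f hf (hBC f₁ f₂ f f hf hkp)).app X ≫ β) = 𝟙 X :=
  benabou_roubaud_alpha_TA1_general P hBC f f₁ f₂ hf hkp Δ hΔ₁ hΔ₂ X β hAC1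
end
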